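/- Let e = 1 or e = 2. Let A = ℤ[c, m, y]/(2c, c·m) and B = ℤ[c, z]/(2c), and let φ : A → B be the ring homomorphism determined by φ(c) = c, φ(m) = 2z, and φ(y) = (c^e + z)·z. Then the cokernel B/φ(A), as an abelian group, is a vector space over ℤ/2 (every element is annihilated by 2), and the residue classes of the monomials c^i·z^j with j ≥ 1 and 0 ≤ i < j·e form a ℤ/2-basis of B/φ(A). -/

import Mathlib

open MvPolynomial

/-- `A = ℤ[c, m, y]/(2c, cm)`, with `c = X 0`, `m = X 1`, `y = X 2`. -/
noncomputable abbrev BooteRayA : Type :=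
  MvPolynomial (Fin 3) ℤ ⧸
    Ideal.span ({2 * X 0, X 0 * X 1} : Set (MvPolynomial (Fin 3) ℤ))

/-- `B = ℤ[c, z]/(2c)`, with `c = X 0`, `z = X 1`. -/
noncomputable abbrev BooteRayB : Type :=
  MvPolynomial (Fin 2) ℤ ⧸
    Ideal.span ({2 * X 0} : Set (MvPolynomial (Fin 2) ℤ))

/-- The index set of pairs `(i, j)` with `j ≥ 1` and `0 ≤ i < j·e`. -/
abbrev CokIndex (e : ℕ) : Type := {p : ℕ × ℕ // 1 ≤ p.2 ∧ p.1 < e * p.2}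

abbrev Fe (e : ℕ) := CokIndex e →₀ ZMod 2
lemma BR.jpos {e i j : ℕ} (h : i < e * j) : 1 ≤ j := by
  rcases Nat.eq_zero_or_pos j with rfl | h1
  · simp at h
  · exact h1

lemma BR.torsF {e : ℕ} (x : Fe e) : x + x = 0 := by
  ext a
  simp only [Finsupp.add_apply, Finsupp.coe_zero, Pi.zero_apply]
  exact CharTwo.add_self_eq_zero _

noncomputable def Nf (e : ℕ) (i j : ℕ) : Fe e :=
  if hij : i < e * j then Finsupp.single ⟨(i, j), BR.jpos hij, hij⟩ 1
  else if _ : 1 ≤ e then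
    ∑ k ∈ (Finset.Icc 1 j).attach,
      (j.choose k.1) • Nf e (i - e * k.1) (j + k.1)
  else 0
termination_by i
decreasing_by
  have h1 := (Finset.mem_Icc.mp k.2).1
  have h2 := (Finset.mem_Icc.mp k.2).2
  have h3 : e * k.1 ≤ e * j := Nat.mul_le_mul_left e h2
  have h4 : 1 ≤ e * k.1 := Nat.one_le_iff_ne_zero.mpr (by positivity)
  omega

noncomputable def theta (e : ℕ) : MvPolynomial (Fin 2) ℤ →+ Fe e :=
  (Finsupp.liftAddHom (fun (m : Fin 2 →₀ ℕ) => zmultiplesHom (Fe e) (Nf e (m 0) (m 1)))).comp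
    AddMonoidAlgebra.coeffAddEquiv.toAddMonoidHom

lemma theta_monomial (e : ℕ) (m : Fin 2 →₀ ℕ) (a : ℤ) :
    theta e (monomial m a) = a • Nf e (m 0) (m 1) :=
  Finsupp.liftAddHom_apply_single _ _ _

lemma BR.reidx {M : Type*} [AddCommMonoid M] (j : ℕ) (g : ℕ → M) :
    ∑ k ∈ Finset.range j, g k = ∑ k ∈ Finset.Icc 1 j, g (j - k) := by
  refine Finset.sum_nbij' (fun k => j - k) (fun k => j - k) ?_ ?_ ?_ ?_ ?_ <;>
    intro a ha <;> simp only [Finset.mem_range, Finset.mem_Icc] at ha ⊢ <;>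
    first
      | omega
      | exact congrArg g (by omega)

lemma BR.exp_sum {V : Type*} [AddCommGroup V] (Ψ : MvPolynomial (Fin 2) ℤ →+ V)
    (e a d : ℕ) :
    Ψ (X 0 ^ a * ((X 0 ^ e + X 1) * X 1) ^ d) =
      ∑ k ∈ Finset.range (d + 1),
        (d.choose k) • Ψ (X 0 ^ (a + e * k) * X 1 ^ (2 * d - k)) := by
  have h : (X 0 ^ a * ((X 0 ^ e + X 1) * X 1) ^ d : MvPolynomial (Fin 2) ℤ) =
      ∑ k ∈ Finset.range (d + 1),
        (d.choose k) • (X 0 ^ (a + e * k) * X 1 ^ (2 * d - k)) := by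
    rw [mul_pow, add_pow, Finset.sum_mul, Finset.mul_sum]
    refine Finset.sum_congr rfl fun k hk => ?_
    have hk' : k ≤ d := Nat.lt_succ_iff.mp (Finset.mem_range.mp hk)
    have h2 : 2 * d - k = (d - k) + d := by omega
    rw [nsmul_eq_mul, h2, pow_add, pow_add, pow_mul]
    ring
  rw [h, map_sum]
  exact Finset.sum_congr rfl fun k _ => (map_nsmul Ψ _ _)

-- ## new part
lemma BR.nfrec {e : ℕ} (he : 1 ≤ e) (a d : ℕ) :
    ∑ k ∈ Finset.range (d + 1), (d.choose k) • Nf e (a + e * k) (2 * d - k) = 0 := by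
  have hlast : d.choose d • Nf e (a + e * d) (2 * d - d) = Nf e (a + e * d) d := by
    rw [Nat.choose_self, one_smul]
    congr 1
    omega
  have hmain : ∑ k ∈ Finset.range d, (d.choose k) • Nf e (a + e * k) (2 * d - k)
      = Nf e (a + e * d) d := by
    rw [Nf, dif_neg (by omega), dif_pos he, Finset.sum_attach _
      (fun k => (d.choose k) • Nf e (a + e * d - e * k) (d + k)),
      BR.reidx d (fun k => (d.choose k) • Nf e (a + e * k) (2 * d - k))]
    refine Finset.sum_congr rfl fun k hk => ?_
    have hk1 := (Finset.mem_Icc.mp hk).1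
    have hk2 := (Finset.mem_Icc.mp hk).2
    have hmul : e * (d - k) + e * k = e * d := by
      rw [← Nat.mul_add, Nat.sub_add_cancel hk2]
    have h3 : e * k ≤ a + e * d := by
      have := Nat.mul_le_mul_left e hk2
      omega
    have g1 : a + e * (d - k) = a + e * d - e * k := by zify [h3, hk2]; ring
    have g2 : 2 * d - (d - k) = d + k := by omega
    rw [Nat.choose_symm hk2, g1, g2]
  rw [Finset.sum_range_succ, hlast, hmain]
  exact BR.torsF _

lemma BR.theta_mono (e i j : ℕ) :
    theta e (X 0 ^ i * X 1 ^ j) = Nf e i j := by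
  rw [X_pow_eq_monomial, X_pow_eq_monomial, monomial_mul, mul_one, theta_monomial]
  simp [Finsupp.single_apply]

lemma BR.theta_kill {e : ℕ} (he : 1 ≤ e) (a d : ℕ) :
    theta e (X 0 ^ a * ((X 0 ^ e + X 1) * X 1) ^ d) = 0 := by
  rw [BR.exp_sum]
  calc ∑ k ∈ Finset.range (d + 1), (d.choose k) • theta e (X 0 ^ (a + e * k) * X 1 ^ (2 * d - k))
      = ∑ k ∈ Finset.range (d + 1), (d.choose k) • Nf e (a + e * k) (2 * d - k) := by
        exact Finset.sum_congr rfl fun k _ => by rw [BR.theta_mono]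
    _ = 0 := BR.nfrec he a d

lemma BR.gen_step {V : Type*} [AddCommGroup V] (Ψ : MvPolynomial (Fin 2) ℤ →+ V)
    (hV : ∀ v : V, v + v = 0) {e : ℕ}
    (hkill : ∀ a d, Ψ (X 0 ^ a * ((X 0 ^ e + X 1) * X 1) ^ d) = 0)
    (i j : ℕ) (hij : e * j ≤ i) :
    Ψ (X 0 ^ i * X 1 ^ j) =
      ∑ k ∈ Finset.Icc 1 j, (j.choose k) • Ψ (X 0 ^ (i - e * k) * X 1 ^ (j + k)) := by
  have h0 := hkill (i - e * j) j
  rw [BR.exp_sum, Finset.sum_range_succ] at h0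
  have hl : (i - e * j) + e * j = i := by omega
  rw [Nat.choose_self, one_smul, hl] at h0
  have h2j : 2 * j - j = j := by omega
  rw [h2j] at h0
  have key : Ψ (X 0 ^ i * X 1 ^ j)
      = ∑ k ∈ Finset.range j, (j.choose k) • Ψ (X 0 ^ (i - e * j + e * k) * X 1 ^ (2 * j - k)) := by
    exact add_left_cancel (h0.trans (hV (∑ k ∈ Finset.range j,
      (j.choose k) • Ψ (X 0 ^ (i - e * j + e * k) * X 1 ^ (2 * j - k)))).symm)
  rw [key, BR.reidx j (fun k => (j.choose k) • Ψ (X 0 ^ (i - e * j + e * k) * X 1 ^ (2 * j - k)))]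
  refine Finset.sum_congr rfl fun k hk => ?_
  have hk1 := (Finset.mem_Icc.mp hk).1
  have hk2 := (Finset.mem_Icc.mp hk).2
  have hmul : e * (j - k) + e * k = e * j := by
    rw [← Nat.mul_add, Nat.sub_add_cancel hk2]
  have h3 : e * k ≤ e * j := Nat.mul_le_mul_left e hk2
  have h4 : e * k ≤ i := le_trans h3 hij
  have g1 : i - e * j + e * (j - k) = i - e * k := by zify [hij, h3, h4, hk2]; ring
  have g2 : 2 * j - (j - k) = j + k := by omega
  rw [Nat.choose_symm hk2, g1, g2]

-- ## substitution and polynomial helpers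

noncomputable def fsub (e : ℕ) : Fin 3 → MvPolynomial (Fin 2) ℤ :=
  ![X 0, 2 * X 1, (X 0 ^ e + X 1) * X 1]

lemma fsub0 (e : ℕ) : fsub e 0 = X 0 := rfl
lemma fsub1 (e : ℕ) : fsub e 1 = 2 * X 1 := rfl
lemma fsub2 (e : ℕ) : fsub e 2 = (X 0 ^ e + X 1) * X 1 := rfl

lemma BR.intCast_eq_C (a : ℤ) : ((a : ℤ) : MvPolynomial (Fin 2) ℤ) = C a := by
  rw [← map_intCast (C : ℤ →+* MvPolynomial (Fin 2) ℤ) a, Int.cast_id]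

lemma BR.intCast_eq_C3 (a : ℤ) : ((a : ℤ) : MvPolynomial (Fin 3) ℤ) = C a := by
  rw [← map_intCast (C : ℤ →+* MvPolynomial (Fin 3) ℤ) a, Int.cast_id]

lemma BR.amap_eq (a : ℤ) : algebraMap ℤ (MvPolynomial (Fin 2) ℤ) a = C a := by
  rw [eq_intCast]
  exact BR.intCast_eq_C a

lemma BR.mono2 (m : Fin 2 →₀ ℕ) (a : ℤ) :
    (monomial m a : MvPolynomial (Fin 2) ℤ) = C a * (X 0 ^ m 0 * X 1 ^ m 1) := by
  rw [monomial_eq]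
  congr 1
  rw [Finsupp.prod_fintype _ _ (fun i => pow_zero _)]
  exact Fin.prod_univ_two _

lemma BR.mono3 (m : Fin 3 →₀ ℕ) (a : ℤ) :
    (monomial m a : MvPolynomial (Fin 3) ℤ) = C a * (X 0 ^ m 0 * X 1 ^ m 1 * X 2 ^ m 2) := by
  rw [monomial_eq]
  congr 1
  rw [Finsupp.prod_fintype _ _ (fun i => pow_zero _)]
  exact Fin.prod_univ_three _

lemma BR.aeval_mono (e : ℕ) (m : Fin 3 →₀ ℕ) (a : ℤ) :
    aeval (fsub e) (monomial m a) =
      C a * ((X 0 : MvPolynomial (Fin 2) ℤ) ^ m 0 * (2 * X 1) ^ m 1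
        * ((X 0 ^ e + X 1) * X 1) ^ m 2) := by
  rw [BR.mono3, map_mul, map_mul, map_mul, map_pow, map_pow, map_pow,
    aeval_X, aeval_X, aeval_X, aeval_C, fsub0, fsub1, fsub2, BR.amap_eq]

lemma BR.aeval_kill {e : ℕ} (he : 1 ≤ e) (q : MvPolynomial (Fin 3) ℤ) :
    theta e (aeval (fsub e) q) = 0 := by
  induction q using MvPolynomial.induction_on' with
  | add p q hp hq => rw [map_add, map_add, hp, hq, add_zero]
  | monomial m a =>
    rw [BR.aeval_mono]
    rcases Nat.eq_zero_or_pos (m 1) with h1 | h1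
    · rw [h1, pow_zero, mul_one, C_mul', map_zsmul, BR.theta_kill he, smul_zero]
    · obtain ⟨b, hb⟩ : ∃ b, m 1 = b + 1 := ⟨m 1 - 1, by omega⟩
      rw [hb]
      have h2 : C a * ((X 0 : MvPolynomial (Fin 2) ℤ) ^ m 0 * (2 * X 1) ^ (b + 1)
            * ((X 0 ^ e + X 1) * X 1) ^ m 2)
          = C a * (X 0 ^ m 0 * (2 * X 1) ^ b * (X 1 * ((X 0 ^ e + X 1) * X 1) ^ m 2))
            + C a * (X 0 ^ m 0 * (2 * X 1) ^ b * (X 1 * ((X 0 ^ e + X 1) * X 1) ^ m 2)) := by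
        ring
      rw [h2, map_add]
      exact BR.torsF _

noncomputable def thetaB (e : ℕ) : BooteRayB →+ Fe e :=
  ((Submodule.liftQ ((Ideal.span ({2 * X 0} : Set (MvPolynomial (Fin 2) ℤ))).restrictScalars ℤ)
      (theta e).toIntLinearMap (by
        intro p hp
        obtain ⟨q, hq⟩ := Ideal.mem_span_singleton.mp hp
        subst hq
        have h2 : (2 : MvPolynomial (Fin 2) ℤ) * X 0 * q = X 0 * q + X 0 * q := by ring
        simp only [LinearMap.mem_ker, AddMonoidHom.coe_toIntLinearMap, h2, map_add]
        exact BR.torsF _)).comp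
    (Submodule.Quotient.restrictScalarsEquiv ℤ _).symm.toLinearMap).toAddMonoidHom

lemma thetaB_mk (e : ℕ) (p : MvPolynomial (Fin 2) ℤ) :
    thetaB e (Ideal.Quotient.mk (Ideal.span ({2 * X 0} : Set (MvPolynomial (Fin 2) ℤ))) p)
      = theta e p := by
  have h1 : (Submodule.Quotient.restrictScalarsEquiv ℤ
        (Ideal.span ({2 * X 0} : Set (MvPolynomial (Fin 2) ℤ)))).symm
      (Ideal.Quotient.mk (Ideal.span ({2 * X 0} : Set (MvPolynomial (Fin 2) ℤ))) p)
        = Submodule.Quotient.mk p := by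
    rw [← Ideal.Quotient.mk_eq_mk]
    exact Submodule.Quotient.restrictScalarsEquiv_symm_mk ℤ _ p
  rw [thetaB]
  simp only [LinearMap.toAddMonoidHom_coe, LinearMap.coe_comp, Function.comp_apply,
    LinearEquiv.coe_coe, h1, Submodule.liftQ_apply, AddMonoidHom.coe_toIntLinearMap]

set_option maxHeartbeats 1000000 in
set_option synthInstance.maxHeartbeats 200000 in
/-- **Cokernel of the restriction map `i*` (Lemma 5.3 of Boote–Ray).**
Let `e = 1` or `e = 2`, let `A = ℤ[c,m,y]/(2c, cm)` and `B = ℤ[c,z]/(2c)`, and let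
`φ : A → B` be the ring homomorphism determined by `φ(c) = c`, `φ(m) = 2z` and
`φ(y) = (c^e + z)z`.  Then the cokernel `B/φ(A)` is an elementary abelian `2`-group, and
the residue classes of the monomials `c^i z^j` with `j ≥ 1` and `0 ≤ i < j·e` form a
`ℤ/2`-basis of it: there is an additive isomorphism of `B/φ(A)` with the free
`ℤ/2`-module on the index set carrying these classes to the standard basis vectors. -/
theorem coker_of_restriction (e : ℕ) (he : e = 1 ∨ e = 2)
    (φ : BooteRayA →+* BooteRayB)
    (hc : φ (Ideal.Quotient.mk _ (X 0)) = Ideal.Quotient.mk _ (X 0))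
    (hm : φ (Ideal.Quotient.mk _ (X 1)) = Ideal.Quotient.mk _ (2 * X 1))
    (hy : φ (Ideal.Quotient.mk _ (X 2)) = Ideal.Quotient.mk _ ((X 0 ^ e + X 1) * X 1)) :
    (∀ x : BooteRayB ⧸ φ.toAddMonoidHom.range, x + x = 0) ∧
    ∃ ψ : (BooteRayB ⧸ φ.toAddMonoidHom.range) ≃+ (CokIndex e →₀ ZMod 2),
      ∀ p : CokIndex e,
        ψ (QuotientAddGroup.mk (Ideal.Quotient.mk _ (X 0 ^ p.1.1 * X 1 ^ p.1.2))) =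
          Finsupp.single p 1 := by
  have he1 : 1 ≤ e := by rcases he with rfl | rfl <;> norm_num
  classical
  -- the substitution identity
  have star : ∀ q : MvPolynomial (Fin 3) ℤ,
      φ (Ideal.Quotient.mk _ q) = Ideal.Quotient.mk _ (aeval (fsub e) q) := by
    have hcomp : φ.comp
          (Ideal.Quotient.mk (Ideal.span ({2 * X 0, X 0 * X 1} : Set (MvPolynomial (Fin 3) ℤ)))) =
        (Ideal.Quotient.mk (Ideal.span ({2 * X 0} : Set (MvPolynomial (Fin 2) ℤ)))).comp
          ((aeval (fsub e) :
            MvPolynomial (Fin 3) ℤ →ₐ[ℤ] MvPolynomial (Fin 2) ℤ) :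
              MvPolynomial (Fin 3) ℤ →+* MvPolynomial (Fin 2) ℤ) := by
      apply MvPolynomial.ringHom_ext
      · intro a
        simp only [← BR.intCast_eq_C3, map_intCast]
      · intro i
        fin_cases i
        · simpa [fsub0] using hc
        · simpa [fsub1] using hm
        · simpa [fsub2] using hy
    intro q
    exact RingHom.congr_fun hcomp q
  have memS : ∀ q : MvPolynomial (Fin 3) ℤ,
      Ideal.Quotient.mk _ (aeval (fsub e) q) ∈ φ.toAddMonoidHom.range := fun q =>
    AddMonoidHom.mem_range.mpr ⟨Ideal.Quotient.mk _ q, star q⟩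
  have hdvd : ∀ d : ℕ, ∃ w, ((X 0 ^ e + X 1 : MvPolynomial (Fin 2) ℤ)) ^ d - X 1 ^ d
      = X 0 * w := by
    intro d
    have h1 : (X 0 : MvPolynomial (Fin 2) ℤ) ∣ (X 0 ^ e + X 1) - X 1 := by
      have h2 : (X 0 ^ e + X 1 : MvPolynomial (Fin 2) ℤ) - X 1 = X 0 ^ e := by ring
      rw [h2]
      exact dvd_pow_self _ (by omega)
    exact h1.trans (sub_dvd_pow_sub_pow _ _ d)
  -- 2-torsion of the quotient, polynomial level
  have claim2 : ∀ i j : ℕ,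
      Ideal.Quotient.mk _ ((X 0 : MvPolynomial (Fin 2) ℤ) ^ i * X 1 ^ j)
        + Ideal.Quotient.mk _ ((X 0 : MvPolynomial (Fin 2) ℤ) ^ i * X 1 ^ j)
          ∈ φ.toAddMonoidHom.range := by
    intro i j
    rw [← map_add]
    rcases i with _ | i'
    · rcases Nat.even_or_odd j with ⟨d, hd⟩ | ⟨d, hd⟩
      · subst hd
        obtain ⟨w, hw⟩ := hdvd d
        have haev : aeval (fsub e) ((X 2 : MvPolynomial (Fin 3) ℤ) ^ d)
            = ((X 0 ^ e + X 1) * X 1) ^ d := by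
          rw [map_pow, aeval_X, fsub2]
        have hkey : Ideal.Quotient.mk (Ideal.span ({2 * X 0} : Set (MvPolynomial (Fin 2) ℤ)))
              ((X 0 : MvPolynomial (Fin 2) ℤ) ^ 0 * X 1 ^ (d + d)
                + X 0 ^ 0 * X 1 ^ (d + d))
            = Ideal.Quotient.mk _ (aeval (fsub e) ((X 2 : MvPolynomial (Fin 3) ℤ) ^ d))
                + Ideal.Quotient.mk _ (aeval (fsub e) ((X 2 : MvPolynomial (Fin 3) ℤ) ^ d)) := by
          rw [← map_add, Ideal.Quotient.mk_eq_mk_iff_sub_mem, haev, mul_pow]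
          refine Ideal.mem_span_singleton.mpr ⟨-(X 1 ^ d * w), ?_⟩
          linear_combination (-2 * (X 1 : MvPolynomial (Fin 2) ℤ) ^ d) * hw
        rw [hkey]
        exact add_mem (memS _) (memS _)
      · subst hd
        obtain ⟨w, hw⟩ := hdvd d
        have haev : aeval (fsub e) ((X 1 : MvPolynomial (Fin 3) ℤ) * X 2 ^ d)
            = 2 * X 1 * ((X 0 ^ e + X 1) * X 1) ^ d := by
          rw [map_mul, map_pow, aeval_X, aeval_X, fsub1, fsub2]
        have hkey : Ideal.Quotient.mk (Ideal.span ({2 * X 0} : Set (MvPolynomial (Fin 2) ℤ)))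
              ((X 0 : MvPolynomial (Fin 2) ℤ) ^ 0 * X 1 ^ (2 * d + 1)
                + X 0 ^ 0 * X 1 ^ (2 * d + 1))
            = Ideal.Quotient.mk _ (aeval (fsub e) ((X 1 : MvPolynomial (Fin 3) ℤ) * X 2 ^ d)) := by
          rw [Ideal.Quotient.mk_eq_mk_iff_sub_mem, haev, mul_pow]
          refine Ideal.mem_span_singleton.mpr ⟨-(X 1 ^ (d + 1) * w), ?_⟩
          linear_combination (-2 * (X 1 : MvPolynomial (Fin 2) ℤ) ^ (d + 1)) * hw
        rw [hkey]
        exact memS _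
    · have h0 : ((X 0 : MvPolynomial (Fin 2) ℤ) ^ (i' + 1) * X 1 ^ j
          + X 0 ^ (i' + 1) * X 1 ^ j) ∈ Ideal.span ({2 * X 0} : Set (MvPolynomial (Fin 2) ℤ)) :=
        Ideal.mem_span_singleton.mpr ⟨X 0 ^ i' * X 1 ^ j, by ring⟩
      rw [Ideal.Quotient.eq_zero_iff_mem.mpr h0]
      exact zero_mem _
  have hBtor : ∀ p : MvPolynomial (Fin 2) ℤ,
      Ideal.Quotient.mk _ p + Ideal.Quotient.mk _ p ∈ φ.toAddMonoidHom.range := by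
    intro p
    induction p using MvPolynomial.induction_on' with
    | add p q hp hq =>
      rw [map_add, add_add_add_comm]
      exact add_mem hp hq
    | monomial m a =>
      rw [BR.mono2, C_mul', map_zsmul, ← smul_add]
      exact AddSubgroup.zsmul_mem _ (claim2 (m 0) (m 1)) a
  have part1 : ∀ x : BooteRayB ⧸ φ.toAddMonoidHom.range, x + x = 0 := by
    intro x
    induction x using QuotientAddGroup.induction_on with
    | H b =>
      obtain ⟨p, rfl⟩ := Ideal.Quotient.mk_surjective b
      rw [← QuotientAddGroup.mk_add]
      exact (QuotientAddGroup.eq_zero_iff _).mpr (hBtor p)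
  refine ⟨part1, ?_⟩
  -- the projection hom from polynomials to the cokernel
  let PiH : MvPolynomial (Fin 2) ℤ →+ (BooteRayB ⧸ φ.toAddMonoidHom.range) :=
    (QuotientAddGroup.mk' _).comp (Ideal.Quotient.mk
      (Ideal.span ({2 * X 0} : Set (MvPolynomial (Fin 2) ℤ)))).toAddMonoidHom
  have PiH_apply : ∀ p : MvPolynomial (Fin 2) ℤ,
      PiH p = QuotientAddGroup.mk (Ideal.Quotient.mk _ p) := fun _ => rfl
  have hkillPi : ∀ a d, PiH (X 0 ^ a * ((X 0 ^ e + X 1) * X 1) ^ d) = 0 := by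
    intro a d
    rw [PiH_apply]
    refine (QuotientAddGroup.eq_zero_iff _).mpr ?_
    have haev : (X 0 : MvPolynomial (Fin 2) ℤ) ^ a * ((X 0 ^ e + X 1) * X 1) ^ d
        = aeval (fsub e) ((X 0 : MvPolynomial (Fin 3) ℤ) ^ a * X 2 ^ d) := by
      rw [map_mul, map_pow, map_pow, aeval_X, aeval_X, fsub0, fsub2]
    rw [haev]
    exact memS _
  have genPi := BR.gen_step PiH part1 (e := e) hkillPi
  -- the descended map on the cokernel
  let θQ : (BooteRayB ⧸ φ.toAddMonoidHom.range) →+ Fe e :=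
    QuotientAddGroup.lift _ (thetaB e) (by
      intro b hb
      obtain ⟨aq, rfl⟩ := AddMonoidHom.mem_range.mp hb
      obtain ⟨q, rfl⟩ := Ideal.Quotient.mk_surjective aq
      show thetaB e (φ (Ideal.Quotient.mk _ q)) = 0
      rw [star, thetaB_mk]
      exact BR.aeval_kill he1 q)
  have θQ_mk : ∀ p : MvPolynomial (Fin 2) ℤ,
      θQ (QuotientAddGroup.mk (Ideal.Quotient.mk
        (Ideal.span ({2 * X 0} : Set (MvPolynomial (Fin 2) ℤ))) p)) = theta e p := by
    intro p
    show QuotientAddGroup.lift _ (thetaB e) _ _ = _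
    rw [QuotientAddGroup.lift_mk, thetaB_mk]
  -- the section
  let s : Fe e →+ (BooteRayB ⧸ φ.toAddMonoidHom.range) :=
    Finsupp.liftAddHom (fun p => ZMod.lift 2
      ⟨zmultiplesHom _ (PiH (X 0 ^ p.1.1 * X 1 ^ p.1.2)), by
        simp only [zmultiplesHom_apply]
        rw [show ((2 : ℕ) : ℤ) = 2 by norm_num, two_zsmul]
        exact part1 _⟩)
  have hs1 : ∀ p : CokIndex e,
      s (Finsupp.single p 1) = PiH (X 0 ^ p.1.1 * X 1 ^ p.1.2) := by
    intro p
    rw [show s (Finsupp.single p 1) = _ from Finsupp.liftAddHom_apply_single _ _ _]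
    rw [show (1 : ZMod 2) = ((1 : ℤ) : ZMod 2) by norm_num, ZMod.lift_coe]
    simp [zmultiplesHom_apply]
    exact one_zsmul _
  have SNF : ∀ i j : ℕ, s (Nf e i j) = PiH (X 0 ^ i * X 1 ^ j) := by
    intro i
    induction i using Nat.strong_induction_on with
    | _ i IH =>
      intro j
      rw [Nf]
      split_ifs with h1
      · exact hs1 ⟨(i, j), BR.jpos h1, h1⟩
      · calc s (∑ k ∈ (Finset.Icc 1 j).attach,
              (j.choose k.1) • Nf e (i - e * k.1) (j + k.1))
            = ∑ k ∈ (Finset.Icc 1 j).attach,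
              (j.choose k.1) • s (Nf e (i - e * k.1) (j + k.1)) := by
              rw [map_sum]
              exact Finset.sum_congr rfl fun k _ => map_nsmul s _ _
          _ = ∑ k ∈ (Finset.Icc 1 j).attach,
              (j.choose k.1) • PiH (X 0 ^ (i - e * k.1) * X 1 ^ (j + k.1)) := by
              refine Finset.sum_congr rfl fun k _ => ?_
              have hk1 := (Finset.mem_Icc.mp k.2).1
              have hk2 := (Finset.mem_Icc.mp k.2).2
              have h3 : e * k.1 ≤ e * j := Nat.mul_le_mul_left e hk2
              have h4 : 1 ≤ e * k.1 := Nat.one_le_iff_ne_zero.mpr (by positivity)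
              rw [IH (i - e * k.1) (by omega) (j + k.1)]
          _ = ∑ k ∈ Finset.Icc 1 j,
              (j.choose k) • PiH (X 0 ^ (i - e * k) * X 1 ^ (j + k)) :=
              Finset.sum_attach (Finset.Icc 1 j)
                (fun k => (j.choose k) • PiH (X 0 ^ (i - e * k) * X 1 ^ (j + k)))
          _ = PiH (X 0 ^ i * X 1 ^ j) := (genPi i j (by omega)).symm
  have L5 : ∀ p : MvPolynomial (Fin 2) ℤ, s (theta e p) = PiH p := by
    intro p
    induction p using MvPolynomial.induction_on' with
    | add p q hp hq => rw [map_add, map_add, map_add, hp, hq]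
    | monomial m a =>
      rw [theta_monomial, map_zsmul, SNF, BR.mono2, C_mul', map_zsmul]
  have left_inv : ∀ x, s (θQ x) = x := by
    intro x
    induction x using QuotientAddGroup.induction_on with
    | H b =>
      obtain ⟨p, rfl⟩ := Ideal.Quotient.mk_surjective b
      rw [θQ_mk, L5, PiH_apply]
  have hfin : ∀ p : CokIndex e,
      θQ (QuotientAddGroup.mk (Ideal.Quotient.mk
        (Ideal.span ({2 * X 0} : Set (MvPolynomial (Fin 2) ℤ)))
        (X 0 ^ p.1.1 * X 1 ^ p.1.2))) = Finsupp.single p 1 := by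
    intro p
    rw [θQ_mk, BR.theta_mono, Nf, dif_pos p.2.2]
  have right_inv : ∀ y, θQ (s y) = y := by
    have hcomp : θQ.comp s = AddMonoidHom.id _ := by
      apply Finsupp.addHom_ext
      intro p r
      have hr : r = 0 ∨ r = 1 := by revert r; decide
      rcases hr with rfl | rfl
      · simp
      · show θQ (s (Finsupp.single p 1)) = Finsupp.single p 1
        rw [hs1, PiH_apply]
        exact hfin p
    intro y
    exact DFunLike.congr_fun hcomp y
  refine ⟨{ toFun := θQ, invFun := s, left_inv := left_inv, right_inv := right_inv,
            map_add' := map_add θQ }, ?_⟩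
  intro p
  exact hfin p
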